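/- arXiv:2410.10962 — 2 statements merged into one kernel-verified Lean document; each statement's English description precedes it below -/
import Mathlib

section
/- Two subgroups J and K of G are 𝒪-inseparable if and only if for every L ∈ Sub^𝒪(G), the number of J-fixed points of G/L equals the number of K-fixed points of G/L, i.e., |(G/L)^J| = |(G/L)^K|. -/
/-!
The stabilizer of `gL ∈ G/L` is `gLg⁻¹`, which lies in `Sub^𝒪(G)` when `L` does; hence `J` fixes
`gL` iff `H_𝒪(J)` does, and the fixed-point counts of `J` only depend on the conjugacy class of
`H_𝒪(J)`. Conversely, `H_𝒪(J)` fixes the coset `eH_𝒪(J)`, so equal counts on `G/H_𝒪(J)` make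
`H_𝒪(K)` subconjugate to `H_𝒪(J)`; by symmetry and finiteness the two are conjugate.
-/

/-- A transfer system on a group `G`: a partial order `rel` on subgroups refining the
subgroup relation, closed under conjugation and restriction. -/
structure TransferSystem (G : Type*) [Group G] where
  rel : Subgroup G → Subgroup G → Prop
  le_of_rel : ∀ {K H : Subgroup G}, rel K H → K ≤ H
  refl : ∀ H : Subgroup G, rel H H
  trans : ∀ {J K H : Subgroup G}, rel J K → rel K H → rel J H
  antisymm : ∀ {K H : Subgroup G}, rel K H → rel H K → K = H
  conj : ∀ (g : G) {K H : Subgroup G}, rel K H →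
    rel (K.map (MulAut.conj g).toMonoidHom) (H.map (MulAut.conj g).toMonoidHom)
  restrict : ∀ {K H L : Subgroup G}, rel K H → L ≤ H → rel (K ⊓ L) L

/-- Conjugate subgroup `gKg⁻¹`. -/
def conjSub {G : Type*} [Group G] (g : G) (K : Subgroup G) : Subgroup G :=
  K.map (MulAut.conj g).toMonoidHom

/-- `H_𝒪(J)`: the minimal subgroup containing `J` which transfers to `G` (the top subgroup). -/
noncomputable def HO {G : Type*} [Group G] (O : TransferSystem G) (J : Subgroup G) : Subgroup G :=
  sInf {H : Subgroup G | O.rel H ⊤ ∧ J ≤ H}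

/-- `J ∈ [H]^𝒪`: the inseparability class of `H`, i.e. `H_𝒪(J)` is conjugate to `H`. -/
def inClass {G : Type*} [Group G] (O : TransferSystem G) (H J : Subgroup G) : Prop :=
  ∃ g : G, conjSub g (HO O J) = H

/-- `J` and `K` are 𝒪-inseparable: `H_𝒪(J)` and `H_𝒪(K)` are conjugate. -/
def TSInseparable {G : Type*} [Group G] (O : TransferSystem G) (J K : Subgroup G) : Prop :=
  ∃ g : G, conjSub g (HO O J) = HO O K

section ConjugateSubgroups

variable {G : Type*} [Group G]

lemma conjSub_top (g : G) : conjSub g (⊤ : Subgroup G) = ⊤ :=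
  Subgroup.map_top_of_surjective _ (MulAut.conj g).surjective

lemma card_conjSub (g : G) (L : Subgroup G) : Nat.card (conjSub g L) = Nat.card L :=
  (Nat.card_congr (Subgroup.equivMapOfInjective L _ (MulAut.conj g).injective).toEquiv).symm

lemma eq_conjSub_of_le_conjSub_of_le_conjSub [Finite G] {A B : Subgroup G} {g h : G}
    (hAB : A ≤ conjSub g B) (hBA : B ≤ conjSub h A) : A = conjSub g B := by
  have hB : Nat.card B ≤ Nat.card A := card_conjSub h A ▸ Subgroup.card_le_of_le hBA
  exact Subgroup.eq_of_le_of_card_ge hAB (card_conjSub g B ▸ hB)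

end ConjugateSubgroups

section FixedPoints

variable {G : Type*} [Group G]

lemma mem_fixedPoints_iff_le_stabilizer {X : Type*} [MulAction G X] {A : Subgroup G} {x : X} :
    x ∈ MulAction.fixedPoints A X ↔ A ≤ MulAction.stabilizer G x := by
  simp only [MulAction.mem_fixedPoints, Subtype.forall, Subgroup.mk_smul, SetLike.le_def,
    MulAction.mem_stabilizer_iff]

lemma stabilizer_mk (L : Subgroup G) (g : G) :
    MulAction.stabilizer G (g : G ⧸ L) = conjSub g L := by
  have := MulAction.stabilizer_smul_eq_stabilizer_map_conj g (QuotientGroup.mk 1 : G ⧸ L)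
  rwa [MulAction.Quotient.smul_mk, smul_eq_mul, mul_one, MulAction.stabilizer_quotient] at this

lemma mk_mem_fixedPoints_iff (A L : Subgroup G) (g : G) :
    (g : G ⧸ L) ∈ MulAction.fixedPoints A (G ⧸ L) ↔ A ≤ conjSub g L := by
  rw [← stabilizer_mk]
  exact mem_fixedPoints_iff_le_stabilizer

lemma card_fixedPoints_conjSub {X : Type*} [MulAction G X] (g : G) (A : Subgroup G) :
    Nat.card (MulAction.fixedPoints (conjSub g A) X) = Nat.card (MulAction.fixedPoints A X) := by
  refine (Nat.card_congr (Equiv.subtypeEquiv (MulAction.toPerm g) fun x => ?_)).symm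
  rw [mem_fixedPoints_iff_le_stabilizer, mem_fixedPoints_iff_le_stabilizer, MulAction.toPerm_apply,
    MulAction.stabilizer_smul_eq_stabilizer_map_conj, conjSub,
    Subgroup.map_le_map_iff_of_injective (MulAut.conj g).injective]

lemma card_fixedPoints_quotient_ne_zero_iff [Finite G] (A L : Subgroup G) :
    Nat.card (MulAction.fixedPoints A (G ⧸ L)) ≠ 0 ↔ ∃ g : G, A ≤ conjSub g L := by
  rw [Nat.card_ne_zero, and_iff_left (inferInstance : Finite _), Set.nonempty_coe_sort]
  constructor
  · rintro ⟨x, hx⟩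
    obtain ⟨g, rfl⟩ := QuotientGroup.mk_surjective x
    exact ⟨g, (mk_mem_fixedPoints_iff A L g).mp hx⟩
  · rintro ⟨g, hg⟩
    exact ⟨g, (mk_mem_fixedPoints_iff A L g).mpr hg⟩

end FixedPoints

namespace TransferSystem

variable {G : Type*} [Group G] (O : TransferSystem G)

lemma rel_top_inf {H K : Subgroup G} (hH : O.rel H ⊤) (hK : O.rel K ⊤) : O.rel (H ⊓ K) ⊤ :=
  O.trans (O.restrict hH le_top) hK

lemma rel_top_conjSub (g : G) {H : Subgroup G} (hH : O.rel H ⊤) : O.rel (conjSub g H) ⊤ :=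
  conjSub_top g ▸ O.conj g hH

end TransferSystem

section HO

variable {G : Type*} [Group G] (O : TransferSystem G)

lemma HO_rel_top_and_le [Finite G] (J : Subgroup G) : O.rel (HO O J) ⊤ ∧ J ≤ HO O J := by
  have hInf : InfClosed {H : Subgroup G | O.rel H ⊤ ∧ J ≤ H} := fun H hH K hK =>
    ⟨O.rel_top_inf hH.1 hK.1, le_inf hH.2 hK.2⟩
  exact hInf.sInf_mem (Set.toFinite _) ⟨O.refl ⊤, le_top⟩ subset_rfl

lemma HO_le_iff [Finite G] {J H : Subgroup G} (hH : O.rel H ⊤) : HO O J ≤ H ↔ J ≤ H :=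
  ⟨(HO_rel_top_and_le O J).2.trans, fun hJ => sInf_le ⟨hH, hJ⟩⟩

lemma fixedPoints_HO [Finite G] {L : Subgroup G} (hL : O.rel L ⊤) (J : Subgroup G) :
    MulAction.fixedPoints (HO O J) (G ⧸ L) = MulAction.fixedPoints J (G ⧸ L) := by
  ext x
  obtain ⟨g, rfl⟩ := QuotientGroup.mk_surjective x
  rw [mk_mem_fixedPoints_iff, mk_mem_fixedPoints_iff, HO_le_iff O (O.rel_top_conjSub g hL)]

lemma exists_HO_le_conjSub_of_card_fixedPoints_eq [Finite G] {J K : Subgroup G}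
    (h : ∀ L : Subgroup G, O.rel L ⊤ →
      Nat.card (MulAction.fixedPoints J (G ⧸ L)) = Nat.card (MulAction.fixedPoints K (G ⧸ L))) :
    ∃ g : G, HO O K ≤ conjSub g (HO O J) := by
  have hJ := (HO_rel_top_and_le O J).1
  rw [← card_fixedPoints_quotient_ne_zero_iff, fixedPoints_HO O hJ, ← h _ hJ,
    ← fixedPoints_HO O hJ, card_fixedPoints_quotient_ne_zero_iff]
  exact ⟨1, fun x hx => by simpa [conjSub] using hx⟩

end HO

/-- `J` and `K` are 𝒪-inseparable iff they have the same number of fixed points on the coset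
space for every member of `Sub^𝒪(G)`. -/
theorem inseparable_iff_fixedPoints_card_eq {G : Type*} [Group G] [Finite G]
    (O : TransferSystem G) (J K : Subgroup G) :
    TSInseparable O J K ↔
      ∀ L : Subgroup G, O.rel L ⊤ →
        Nat.card (MulAction.fixedPoints J (G ⧸ L)) =
          Nat.card (MulAction.fixedPoints K (G ⧸ L)) := by
  constructor
  · rintro ⟨g, hg⟩ L hL
    rw [← fixedPoints_HO O hL J, ← fixedPoints_HO O hL K, ← hg]
    exact (card_fixedPoints_conjSub g (HO O J)).symm
  · intro h
    obtain ⟨g, hg⟩ := exists_HO_le_conjSub_of_card_fixedPoints_eq O h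
    obtain ⟨_, hg'⟩ := exists_HO_le_conjSub_of_card_fixedPoints_eq O fun L hL => (h L hL).symm
    exact ⟨g, (eq_conjSub_of_le_conjSub_of_le_conjSub hg hg').symm⟩
end

section
/- Suppose L ≥ [H]^𝒪 (some element of [H]^𝒪 is contained in L) and L_g^H := L ∩ gHg⁻¹ lies in [H]^𝒪. Then the normalizer of L_g^H in L equals N_G(gHg⁻¹) ∩ L. -/
/-!
Conjugation-equivariance of `H_𝒪` shows that every element normalizing `J` normalizes `H_𝒪(J)`.
For `J = L ∩ gHg⁻¹` in `[H]^𝒪`, `H_𝒪(J)` lies in `gHg⁻¹` and is conjugate to it, so in a finite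
group it equals `gHg⁻¹`; hence `N_L(J) ≤ N_G(gHg⁻¹)`. Conversely an element of `L` normalizing
`gHg⁻¹` normalizes `L ∩ gHg⁻¹`.
-/

open Pointwise

section

variable {G : Type*} [Group G]

theorem conjSub_eq_smul (g : G) (K : Subgroup G) : conjSub g K = MulAut.conj g • K :=
  rfl

theorem Subgroup.eq_smul_of_le_smul {α : Type*} [Group α] [MulDistribMulAction α G] [Finite G]
    {K : Subgroup G} (a : α) (h : K ≤ a • K) : K = a • K :=
  Subgroup.eq_of_le_of_card_ge h (Nat.card_congr (Subgroup.equivSMul a K).toEquiv).ge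

theorem TransferSystem.rel_top_conjSub_s14 (O : TransferSystem G) {K : Subgroup G} (hK : O.rel K ⊤)
    (x : G) : O.rel (conjSub x K) ⊤ := by
  have := O.conj x hK
  rwa [Subgroup.map_top_of_surjective _ (MulAut.conj x).surjective] at this

theorem HO_le (O : TransferSystem G) {J M : Subgroup G} (hM : O.rel M ⊤) (hJ : J ≤ M) :
    HO O J ≤ M :=
  sInf_le ⟨hM, hJ⟩

theorem HO_conjSub_le (O : TransferSystem G) (x : G) (J : Subgroup G) :
    HO O (conjSub x J) ≤ conjSub x (HO O J) := by
  rw [conjSub_eq_smul, conjSub_eq_smul, Subgroup.subset_pointwise_smul_iff]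
  refine le_sInf fun N ⟨hN, hJN⟩ => ?_
  rw [Subgroup.pointwise_smul_subset_iff, inv_inv]
  exact HO_le O (O.rel_top_conjSub_s14 hN x) (Subgroup.pointwise_smul_le_pointwise_smul_iff.mpr hJN)

theorem HO_conjSub (O : TransferSystem G) (x : G) (J : Subgroup G) :
    HO O (conjSub x J) = conjSub x (HO O J) := by
  refine (HO_conjSub_le O x J).antisymm ?_
  have := HO_conjSub_le O x⁻¹ (conjSub x J)
  simp only [conjSub_eq_smul, map_inv, inv_smul_smul] at this ⊢
  rwa [Subgroup.pointwise_smul_subset_iff]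

theorem mem_normalizer_iff_conjSub_eq {x : G} {K : Subgroup G} :
    x ∈ Subgroup.normalizer (K : Set G) ↔ conjSub x K = K :=
  Subgroup.mem_normalizer_iff_map_conj_eq

theorem normalizer_le_normalizer_HO (O : TransferSystem G) (J : Subgroup G) :
    Subgroup.normalizer (J : Set G) ≤ Subgroup.normalizer (HO O J : Set G) := by
  intro x hx
  rw [mem_normalizer_iff_conjSub_eq] at hx ⊢
  rw [← HO_conjSub, hx]

theorem HO_eq_of_le_conjSub [Finite G] (O : TransferSystem G) {H J : Subgroup G}
    (hH : O.rel H ⊤) (g : G) (hJ : J ≤ conjSub g H) (hJH : inClass O H J) :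
    HO O J = conjSub g H := by
  obtain ⟨a, rfl⟩ := hJH
  have hle := HO_le O (O.rel_top_conjSub_s14 hH g) hJ
  rw [conjSub_eq_smul, conjSub_eq_smul, smul_smul] at hle ⊢
  exact Subgroup.eq_smul_of_le_smul _ hle

end

theorem normalizer_in_L_eq_general {G : Type*} [Group G] [Finite G] (O : TransferSystem G)
    {H L : Subgroup G} (hH : O.rel H ⊤) (g : G)
    (hLg : inClass O H (L ⊓ conjSub g H)) :
    Subgroup.normalizer ((L ⊓ conjSub g H : Subgroup G) : Set G) ⊓ L =
      Subgroup.normalizer ((conjSub g H : Subgroup G) : Set G) ⊓ L := by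
  have hHO := HO_eq_of_le_conjSub O hH g inf_le_right hLg
  apply le_antisymm
  · have hN := normalizer_le_normalizer_HO O (L ⊓ conjSub g H)
    rw [hHO] at hN
    exact inf_le_inf_right L hN
  · rintro x ⟨hxM, hxL⟩
    exact ⟨Subgroup.inf_normalizer_le_normalizer_inf ⟨L.le_normalizer hxL, hxM⟩, hxL⟩

/-- If `L` is above the class of `H` and `L ⊓ gHg⁻¹` lies in the class, then the normalizer
of `L ⊓ gHg⁻¹` in `L` equals `N_G(gHg⁻¹) ⊓ L`. -/
theorem normalizer_in_L_eq {G : Type*} [Group G] [Finite G] (O : TransferSystem G)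
    {H L : Subgroup G} (hH : O.rel H ⊤)
    (habove : ∃ K : Subgroup G, inClass O H K ∧ K ≤ L) (g : G)
    (hLg : inClass O H (L ⊓ conjSub g H)) :
    Subgroup.normalizer ((L ⊓ conjSub g H : Subgroup G) : Set G) ⊓ L =
      Subgroup.normalizer ((conjSub g H : Subgroup G) : Set G) ⊓ L :=
  normalizer_in_L_eq_general O hH g hLg
end
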